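/- Assume d is not a square in F, and suppose u₀ ∈ o satisfies c·u₀² + b·u₀ + a ∈ p and b + 2c·u₀ ∈ p, while a + bu + cu² ∈ o^× for every u ∈ o with u − u₀ ∉ p. Let χ : F^× → ℂ^× be a group homomorphism trivial on o^×, and let Ω : T(F) → ℂ^× be a group homomorphism with conductor exponent C := c(Ω) and with Ω(z·1) = χ(z)² for all z ∈ F^×. Let B : GL₂(F) → ℂ satisfy: (E) B(t·g·k) = Ω(t)·B(g) for all t ∈ T(F), g ∈ GL₂(F), k ∈ I; (N) for every set R ⊆ o of representatives of o/p and every g ∈ GL₂(F), ∑_{u ∈ R} B(g·[[1, 0], [u, 1]]) = −B(g·w); (A) B(g·[[0, 1], [ϖ, 0]]) = −χ(ϖ)·B(g) for all g ∈ GL₂(F). Then B([[1, 0], [u₀, 1]]) = −q·B(w) if C = 0, and B([[1, 0], [u₀, 1]]) = 0 if C > 0. -/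

import Mathlib

/-!
Write `n(u) = [[1, 0], [u, 1]]` and `A(u) = a + bu + cu²`. The torus element `t(−cu, 1)` has
determinant `c·A(u)` and satisfies `t(−cu, 1)·n(u) = w·[[A(u), b + cu], [0, c]]`; when `A(u)` is a
unit it lies in `U₀` and the upper triangular factor lies in `I`, so `B(n(u)) = B(w)` once `Ω` is
trivial on `U₀`. Summing (N) over representatives, all but the one in the class of `u₀` contribute
`B(w)`, which gives `B(n(u₀)) = −q·B(w)`. In general `t(x, y)·n(u) = n(u)·k` where `k` has lower
left entry `−y·A(u)`; at `u = u₀` this entry lies in `𝔭`, so for `t ∈ U₀` the matrix `k` lies in `I`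
and `Ω(t)·B(n(u₀)) = B(n(u₀))`. If `C > 0` some `t ∈ U₀` has `Ω(t) ≠ 1`, hence `B(n(u₀)) = 0`.
-/

open Matrix

noncomputable section

abbrev Zm0 : Type := WithZero (Multiplicative ℤ)

/-- `ev n` is the value (in `ℤₘ₀ = WithZero (Multiplicative ℤ)`) of an element of additive
valuation `n`; thus `x ∈ 𝔭^n` iff `v x ≤ ev n`, `x ∈ 𝔬` iff `v x ≤ ev 0`, and `x ∈ 𝔬^×` iff
`v x = ev 0`. -/
def ev (n : ℤ) : Zm0 := ((Multiplicative.ofAdd (-n) : Multiplicative ℤ) : Zm0)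

variable {F : Type*} [Field F]

/-- the matrix t(x,y) = [[x, cy],[−ay, x−by]] -/
def tmat (a b c x y : F) : Matrix (Fin 2) (Fin 2) F :=
  !![x, c * y; -(a * y), x - b * y]

/-- the torus T(F) ⊆ GL₂(F), as a set of matrices -/
def TSet (a b c : F) : Set (Matrix (Fin 2) (Fin 2) F) :=
  {m | ∃ x y : F, x ^ 2 - b * x * y + a * c * y ^ 2 ≠ 0 ∧ m = tmat a b c x y}

def wmat (F : Type*) [Field F] : Matrix (Fin 2) (Fin 2) F := !![0, 1; -1, 0]

/-- GL₂(𝔬) : integral entries and unit determinant -/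
def GL2O (v : Valuation F Zm0) : Set (Matrix (Fin 2) (Fin 2) F) :=
  {g | (∀ i j, v (g i j) ≤ ev 0) ∧ v g.det = ev 0}

/-- the Iwahori subgroup I = { g ∈ GL₂(𝔬) : g₂₁ ∈ 𝔭 } -/
def Iwahori (v : Valuation F Zm0) : Set (Matrix (Fin 2) (Fin 2) F) :=
  {g | g ∈ GL2O v ∧ v (g 1 0) ≤ ev 1}

/-- membership in U_m ⊆ T(F): U_0 = T(F) ∩ GL₂(𝔬), and for m ≥ 1,
U_m = { t ∈ T(F) : t − 1 ∈ ϖ^m·M₂(𝔬) } -/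
def Umem (v : Valuation F Zm0) (a b c : F) (m : ℕ) (t : Matrix (Fin 2) (Fin 2) F) : Prop :=
  t ∈ TSet a b c ∧
    (if m = 0 then (∀ i j, v (t i j) ≤ ev 0) ∧ v t.det = ev 0
     else ∀ i j, v ((t - 1) i j) ≤ ev m)

section Valuation

variable (v : Valuation F Zm0)

@[simp] lemma ev_zero : ev 0 = 1 := rfl

lemma ev_one_le_ev_zero : ev 1 ≤ ev 0 := WithZero.coe_le_coe.mpr (by decide)

variable {v} in
lemma map_mul_le_of_left_le_ev_zero {x y : F} {g : Zm0} (hx : v x ≤ ev 0) (hy : v y ≤ g) :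
    v (x * y) ≤ g := by
  rw [v.map_mul]
  exact (mul_le_of_le_one_left' hx).trans hy

lemma mem_Iwahori_of_entries {k₀₀ k₀₁ k₁₀ k₁₁ : F} (h₀₀ : v k₀₀ ≤ ev 0) (h₀₁ : v k₀₁ ≤ ev 0)
    (h₁₀ : v k₁₀ ≤ ev 1) (h₁₁ : v k₁₁ ≤ ev 0) (hdet : v (k₀₀ * k₁₁ - k₀₁ * k₁₀) = ev 0) :
    !![k₀₀, k₀₁; k₁₀, k₁₁] ∈ Iwahori v := by
  refine ⟨⟨fun i j => ?_, by rwa [det_fin_two_of]⟩, h₁₀⟩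
  fin_cases i <;> fin_cases j
  exacts [h₀₀, h₀₁, h₁₀.trans ev_one_le_ev_zero, h₁₁]

lemma one_mem_Iwahori : (1 : Matrix (Fin 2) (Fin 2) F) ∈ Iwahori v := by
  rw [one_fin_two]
  refine mem_Iwahori_of_entries v ?_ ?_ ?_ ?_ ?_ <;> simp

lemma lower_mem_Iwahori {u : F} (hu : v u ≤ ev 1) : !![1, 0; u, 1] ∈ Iwahori v :=
  mem_Iwahori_of_entries v (by simp) (by simp) hu (by simp) (by simp)

end Valuation

lemma det_tmat (a b c x y : F) : (tmat a b c x y).det = x ^ 2 - b * x * y + a * c * y ^ 2 := by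
  rw [tmat, det_fin_two_of]
  ring

lemma tmat_mem_TSet {a b c x y : F} (h : (tmat a b c x y).det ≠ 0) :
    tmat a b c x y ∈ TSet a b c :=
  ⟨x, y, det_tmat a b c x y ▸ h, rfl⟩

lemma one_mem_TSet (a b c : F) : (1 : Matrix (Fin 2) (Fin 2) F) ∈ TSet a b c := by
  have h1 : (1 : Matrix (Fin 2) (Fin 2) F) = tmat a b c 1 0 := by
    rw [tmat, one_fin_two]
    simp
  exact h1 ▸ tmat_mem_TSet (by simp [h1.symm])

lemma one_mem_Umem (v : Valuation F Zm0) (a b c : F) (m : ℕ) :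
    Umem v a b c m (1 : Matrix (Fin 2) (Fin 2) F) := by
  refine ⟨one_mem_TSet a b c, ?_⟩
  split_ifs
  · exact ⟨fun i j => by fin_cases i <;> fin_cases j <;> simp, by simp⟩
  · simp

lemma umem_zero_iff {v : Valuation F Zm0} {a b c : F} {t : Matrix (Fin 2) (Fin 2) F} :
    Umem v a b c 0 t ↔ t ∈ TSet a b c ∧ (∀ i j, v (t i j) ≤ ev 0) ∧ v t.det = ev 0 := by
  simp [Umem]

lemma tmat_mul_lower (a b c x y u : F) :
    tmat a b c x y * !![1, 0; u, 1] =
      !![1, 0; u, 1] *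
        !![x + c * u * y, c * y; -(y * (a + b * u + c * u ^ 2)), x - b * y - c * u * y] := by
  simp only [tmat, mul_fin_two]
  ext i j
  fin_cases i <;> fin_cases j <;> simp <;> ring

lemma tmat_neg_mul_lower (a b c u : F) :
    tmat a b c (-(c * u)) 1 * !![1, 0; u, 1] =
      wmat F * !![a + b * u + c * u ^ 2, b + c * u; 0, c] := by
  simp only [tmat, wmat, mul_fin_two]
  ext i j
  fin_cases i <;> fin_cases j <;> simp <;> ring

lemma lower_mul_lower (u u' : F) :
    !![1, 0; u, 1] * !![1, 0; u', 1] = !![(1 : F), 0; u + u', 1] := by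
  simp

section Equivariance

variable {v : Valuation F Zm0} {a b c : F} {Ω B : Matrix (Fin 2) (Fin 2) F → ℂ}

lemma apply_tmat_mul (hE : ∀ t g k, t ∈ TSet a b c → k ∈ Iwahori v → B (t * g * k) = Ω t * B g)
    {t : Matrix (Fin 2) (Fin 2) F} (ht : t ∈ TSet a b c) (g : Matrix (Fin 2) (Fin 2) F) :
    B (t * g) = Ω t * B g := by
  simpa using hE t g 1 ht (one_mem_Iwahori v)

lemma apply_mul_iwahori (hE : ∀ t g k, t ∈ TSet a b c → k ∈ Iwahori v → B (t * g * k) = Ω t * B g)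
    (hΩ : Ω 1 = 1) (g : Matrix (Fin 2) (Fin 2) F) {k : Matrix (Fin 2) (Fin 2) F}
    (hk : k ∈ Iwahori v) : B (g * k) = B g := by
  simpa [hΩ] using hE 1 g k (one_mem_TSet a b c) hk

lemma apply_lower_eq_apply_w
    (hE : ∀ t g k, t ∈ TSet a b c → k ∈ Iwahori v → B (t * g * k) = Ω t * B g)
    (hcond : ∀ t, Umem v a b c 0 t → Ω t = 1)
    (hao : v a ≤ ev 0) (hbo : v b ≤ ev 0) (hc : v c = ev 0) {u : F} (huo : v u ≤ ev 0)
    (hA : v (a + b * u + c * u ^ 2) = ev 0) : B !![1, 0; u, 1] = B (wmat F) := by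
  have hdet : (tmat a b c (-(c * u)) 1).det = c * (a + b * u + c * u ^ 2) := by
    rw [det_tmat]; ring
  have hvdet : v (tmat a b c (-(c * u)) 1).det = ev 0 := by
    rw [hdet, v.map_mul, hc, hA]; rfl
  have hT : tmat a b c (-(c * u)) 1 ∈ TSet a b c :=
    tmat_mem_TSet ((v.ne_zero_iff).mp (hvdet ▸ one_ne_zero))
  have hcu : v (-(c * u)) ≤ ev 0 := by
    rw [v.map_neg]; exact map_mul_le_of_left_le_ev_zero hc.le huo
  have hU : Umem v a b c 0 (tmat a b c (-(c * u)) 1) := by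
    refine umem_zero_iff.2 ⟨hT, fun i j => ?_, hvdet⟩
    fin_cases i <;> fin_cases j
    · simpa [tmat] using hcu
    · simpa [tmat] using hc.le
    · simpa [tmat] using hao
    · simpa [tmat] using v.map_sub_le hcu hbo
  have hk : !![a + b * u + c * u ^ 2, b + c * u; 0, c] ∈ Iwahori v :=
    mem_Iwahori_of_entries v hA.le (v.map_add_le hbo (map_mul_le_of_left_le_ev_zero hc.le huo))
      (by simp) hc.le (by rw [mul_zero, sub_zero, v.map_mul, hA, hc]; rfl)
  calc B !![1, 0; u, 1]
      = Ω (tmat a b c (-(c * u)) 1) * B !![1, 0; u, 1] := by rw [hcond _ hU, one_mul]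
    _ = B (wmat F * !![a + b * u + c * u ^ 2, b + c * u; 0, c]) := by
      rw [← tmat_neg_mul_lower, apply_tmat_mul hE hT]
    _ = B (wmat F) := apply_mul_iwahori hE (hcond 1 (one_mem_Umem v a b c 0)) _ hk

lemma apply_lower_eq_of_sub_le
    (hE : ∀ t g k, t ∈ TSet a b c → k ∈ Iwahori v → B (t * g * k) = Ω t * B g)
    (hΩ : Ω 1 = 1) {u u' : F} (h : v (u - u') ≤ ev 1) : B !![1, 0; u, 1] = B !![1, 0; u', 1] := by
  have hn : !![1, 0; u, 1] = !![1, 0; u', 1] * !![1, 0; u - u', 1] := by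
    rw [lower_mul_lower, add_sub_cancel]
  rw [hn, apply_mul_iwahori hE hΩ _ (lower_mem_Iwahori v h)]

lemma apply_lower_eq_zero_of_ne_one
    (hE : ∀ t g k, t ∈ TSet a b c → k ∈ Iwahori v → B (t * g * k) = Ω t * B g)
    (hΩ : Ω 1 = 1) (hbo : v b ≤ ev 0) (hc : v c = ev 0) {u : F} (huo : v u ≤ ev 0)
    (hu : v (c * u ^ 2 + b * u + a) ≤ ev 1) {t : Matrix (Fin 2) (Fin 2) F}
    (ht : Umem v a b c 0 t) (hΩt : Ω t ≠ 1) : B !![1, 0; u, 1] = 0 := by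
  obtain ⟨hT, hint, hdet⟩ := umem_zero_iff.1 ht
  obtain ⟨x, y, -, rfl⟩ := id hT
  have hx : v x ≤ ev 0 := by simpa [tmat] using hint 0 0
  have hy : v y ≤ ev 0 := by simpa [tmat, hc] using hint 0 1
  have hcuy : v (c * u * y) ≤ ev 0 :=
    map_mul_le_of_left_le_ev_zero (map_mul_le_of_left_le_ev_zero hc.le huo) hy
  have hK : !![x + c * u * y, c * y; -(y * (a + b * u + c * u ^ 2)), x - b * y - c * u * y]
      ∈ Iwahori v := by
    refine mem_Iwahori_of_entries v (v.map_add_le hx hcuy)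
      (map_mul_le_of_left_le_ev_zero hc.le hy) ?_
      (v.map_sub_le (v.map_sub_le hx (map_mul_le_of_left_le_ev_zero hbo hy)) hcuy) ?_
    · rw [v.map_neg, show a + b * u + c * u ^ 2 = c * u ^ 2 + b * u + a by ring]
      exact map_mul_le_of_left_le_ev_zero hy hu
    · rw [← hdet, det_tmat]
      congr 1
      ring
  have hfix : Ω (tmat a b c x y) * B !![1, 0; u, 1] = B !![1, 0; u, 1] := by
    rw [← apply_tmat_mul hE hT, tmat_mul_lower, apply_mul_iwahori hE hΩ _ hK]
  have hzero : (Ω (tmat a b c x y) - 1) * B !![1, 0; u, 1] = 0 := by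
    linear_combination hfix
  exact (mul_eq_zero.1 hzero).resolve_left (sub_ne_zero.2 hΩt)

end Equivariance

lemma eq_neg_card_mul_of_sum_eq_neg {α R : Type*} [DecidableEq α] [CommRing R] {s : Finset α}
    {f : α → R} {a : α} {y : R} (ha : a ∈ s) (hf : ∀ u ∈ s, u ≠ a → f u = y)
    (hsum : ∑ u ∈ s, f u = -y) :
    f a = -(s.card : R) * y := by
  rw [← Finset.add_sum_erase s f ha,
    Finset.sum_congr rfl fun u hu => hf u (Finset.mem_of_mem_erase hu) (Finset.ne_of_mem_erase hu),
    Finset.sum_const, nsmul_eq_mul] at hsum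
  have hcard : ((s.erase a).card : R) + 1 = s.card := by
    rw [← Nat.cast_add_one, Finset.card_erase_add_one ha]
  linear_combination hsum - y * hcard

theorem stmt12_general
    (v : Valuation F Zm0)
    (a b c : F)
    (hao : v a ≤ ev 0) (hbo : v b ≤ ev 0) (hc : v c = ev 0)
    -- the element u₀ :
    (u₀ : F) (hu₀o : v u₀ ≤ ev 0)
    (hu₀ : v (c * u₀ ^ 2 + b * u₀ + a) ≤ ev 1)
    (hother : ∀ u : F, v u ≤ ev 0 → ¬ v (u - u₀) ≤ ev 1 → v (a + b * u + c * u ^ 2) = ev 0)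
    -- q is the cardinality of the residue field 𝔬/𝔭 :
    (q : ℕ) (hq : ∃ R : Finset F, R.card = q ∧ (∀ r ∈ R, v r ≤ ev 0) ∧
      ∀ x : F, v x ≤ ev 0 → ∃! r, r ∈ R ∧ v (x - r) ≤ ev 1)
    -- Ω : T(F) → ℂ^× a homomorphism with conductor exponent C and Ω(z·1) = χ(z)² :
    (Ω : Matrix (Fin 2) (Fin 2) F → ℂ)
    (C : ℕ)
    (hcond : ∀ t, Umem v a b c C t → Ω t = 1)
    (hleast : ∀ m : ℕ, m < C → ∃ t, Umem v a b c m t ∧ Ω t ≠ 1)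
    (B : Matrix (Fin 2) (Fin 2) F → ℂ)
    -- (E) equivariance :
    (hE : ∀ t g k, t ∈ TSet a b c → k ∈ Iwahori v → B (t * g * k) = Ω t * B g)
    -- (N) summing over any set of representatives of 𝔬/𝔭 :
    (hN : ∀ R : Finset F, (∀ r ∈ R, v r ≤ ev 0) →
      (∀ x : F, v x ≤ ev 0 → ∃! r, r ∈ R ∧ v (x - r) ≤ ev 1) →
      ∀ g, (∑ u ∈ R, B (g * !![1, 0; u, 1])) = - B (g * wmat F)) :
    (C = 0 → B !![1, 0; u₀, 1] = -(q : ℂ) * B (wmat F))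
    ∧ (0 < C → B !![1, 0; u₀, 1] = 0) := by
  classical
  have hΩ1 : Ω 1 = 1 := hcond 1 (one_mem_Umem v a b c C)
  refine ⟨?_, fun hC => ?_⟩
  · rintro rfl
    obtain ⟨R, rfl, hRo, hRrep⟩ := hq
    obtain ⟨r₀, ⟨hr₀R, hr₀⟩, hr₀_unique⟩ := hRrep u₀ hu₀o
    have hw : ∀ u ∈ R, u ≠ r₀ → B !![1, 0; u, 1] = B (wmat F) := fun u hu hne =>
      apply_lower_eq_apply_w hE hcond hao hbo hc (hRo u hu) <| hother u (hRo u hu) fun h =>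
        hne <| hr₀_unique u ⟨hu, by rwa [← v.map_neg, neg_sub]⟩
    rw [← apply_lower_eq_of_sub_le hE hΩ1 (by rwa [← v.map_neg, neg_sub] : v (r₀ - u₀) ≤ ev 1)]
    exact eq_neg_card_mul_of_sum_eq_neg hr₀R hw (by simpa using hN R hRo hRrep 1)
  · obtain ⟨t, ht, hΩt⟩ := hleast 0 hC
    exact apply_lower_eq_zero_of_ne_one hE hΩ1 hbo hc hu₀o hu₀ ht hΩt

/-- in the ramified case (with residual double root u₀),
B([[1,0],[u₀,1]]) = −q·B(w) if c(Ω) = 0, and = 0 if c(Ω) > 0. -/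
theorem stmt12
    (v : Valuation F Zm0) (ϖ : F) (hϖ : v ϖ = ev 1)
    (a b c : F)
    (hao : v a ≤ ev 0) (hbo : v b ≤ ev 0) (hc : v c = ev 0)
    (hd0 : b ^ 2 - 4 * (a * c) ≠ 0)
    (hnonsq : ∀ s : F, s ^ 2 ≠ b ^ 2 - 4 * (a * c))
    -- the element u₀ :
    (u₀ : F) (hu₀o : v u₀ ≤ ev 0)
    (hu₀ : v (c * u₀ ^ 2 + b * u₀ + a) ≤ ev 1)
    (hu₀' : v (b + 2 * c * u₀) ≤ ev 1)
    (hother : ∀ u : F, v u ≤ ev 0 → ¬ v (u - u₀) ≤ ev 1 → v (a + b * u + c * u ^ 2) = ev 0)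
    -- q is the cardinality of the residue field 𝔬/𝔭 :
    (q : ℕ) (hq : ∃ R : Finset F, R.card = q ∧ (∀ r ∈ R, v r ≤ ev 0) ∧
      ∀ x : F, v x ≤ ev 0 → ∃! r, r ∈ R ∧ v (x - r) ≤ ev 1)
    -- χ : F^× → ℂ^× a homomorphism trivial on 𝔬^× :
    (χ : F → ℂ)
    (hχmul : ∀ x y : F, x ≠ 0 → y ≠ 0 → χ (x * y) = χ x * χ y)
    (hχne : ∀ x : F, x ≠ 0 → χ x ≠ 0)
    (hχtriv : ∀ u : F, v u = ev 0 → χ u = 1)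
    -- Ω : T(F) → ℂ^× a homomorphism with conductor exponent C and Ω(z·1) = χ(z)² :
    (Ω : Matrix (Fin 2) (Fin 2) F → ℂ)
    (hΩmul : ∀ s t, s ∈ TSet a b c → t ∈ TSet a b c → Ω (s * t) = Ω s * Ω t)
    (hΩne : ∀ t ∈ TSet a b c, Ω t ≠ 0)
    (C : ℕ)
    (hcond : ∀ t, Umem v a b c C t → Ω t = 1)
    (hleast : ∀ m : ℕ, m < C → ∃ t, Umem v a b c m t ∧ Ω t ≠ 1)
    (hcent : ∀ z : F, z ≠ 0 → Ω (z • (1 : Matrix (Fin 2) (Fin 2) F)) = (χ z) ^ 2)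
    (B : Matrix (Fin 2) (Fin 2) F → ℂ)
    -- (E) equivariance :
    (hE : ∀ t g k, t ∈ TSet a b c → k ∈ Iwahori v → B (t * g * k) = Ω t * B g)
    -- (N) summing over any set of representatives of 𝔬/𝔭 :
    (hN : ∀ R : Finset F, (∀ r ∈ R, v r ≤ ev 0) →
      (∀ x : F, v x ≤ ev 0 → ∃! r, r ∈ R ∧ v (x - r) ≤ ev 1) →
      ∀ g, (∑ u ∈ R, B (g * !![1, 0; u, 1])) = - B (g * wmat F))
    -- (A) Atkin–Lehner eigenvector property :
    (hA : ∀ g, B (g * !![0, 1; ϖ, 0]) = -(χ ϖ) * B g) :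
    (C = 0 → B !![1, 0; u₀, 1] = -(q : ℂ) * B (wmat F))
    ∧ (0 < C → B !![1, 0; u₀, 1] = 0) :=
  stmt12_general v a b c hao hbo hc u₀ hu₀o hu₀ hother q hq Ω C hcond hleast B hE hN
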